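/- If a semi-equivelar 3-colored graph of type (4,6,14) is regularly embedded on a surface of Euler characteristic -2, then it has exactly 168 vertices; moreover 168 is the maximum vertex count among all semi-equivelar types (of any number of colors ≥ 3) embeddable on such a surface, i.e., for every solution of p(1 - (d+1)/2 + Σ k_i/q_i) = -2 with even q_i ≥ 4, one has p ≤ 168. -/
import Mathlib


/-- A `(d+1)`-regular properly edge-colored multigraph is modelled by a family
of fixed-point-free involutions `ρ i` on the vertex set.  `ncomp ρ s` is the
number of connected components of the subgraph spanned by the edges whose
colors lie in `s`. -/
noncomputable def ncomp {n : ℕ} {V : Type} (ρ : Fin n → Equiv.Perm V)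
    (s : Finset (Fin n)) : ℕ :=
  Nat.card (Quotient (Relation.EqvGen.setoid fun a b : V => ∃ i ∈ s, ρ i a = b))

/-- The face of the regular embedding at the vertex `v` between the
consecutive colors `i` and `i+1` (indices mod `n`). -/
def faceOf {n : ℕ} [NeZero n] {V : Type} (ρ : Fin n → Equiv.Perm V)
    (i : Fin n) (v : V) : Set V :=
  {w | Relation.EqvGen
    (fun a b => ∃ j ∈ ({i, i + 1} : Finset (Fin n)), ρ j a = b) v w}

section SEHelpers
lemma card_eq_classes_mul {V : Type} [Finite V] (s : Setoid V) (c : ℕ)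
    (h : ∀ v : V, Nat.card {w | s.r v w} = c) :
    Nat.card V = Nat.card (Quotient s) * c := by
  classical
  have : Fintype V := Fintype.ofFinite V
  have e := Equiv.sigmaFiberEquiv (Quotient.mk s)
  have h1 : Nat.card V = Nat.card ((y : Quotient s) × {x // Quotient.mk s x = y}) :=
    (Nat.card_congr e).symm
  rw [h1, Nat.card_eq_fintype_card, Fintype.card_sigma]
  have hfib : ∀ y : Quotient s, Fintype.card {x // Quotient.mk s x = y} = c := by
    refine Quotient.ind ?_
    intro v
    have e2 : {x // Quotient.mk s x = Quotient.mk s v} ≃ {w | s.r v w} := by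
      refine Equiv.subtypeEquivRight ?_
      intro x
      rw [Quotient.eq]
      exact ⟨fun h' => s.symm h', fun h' => s.symm h'⟩
    rw [← Nat.card_eq_fintype_card, Nat.card_congr e2, h]
  simp [hfib, Finset.sum_const, Nat.card_eq_fintype_card]

-- matching class
lemma matching_class {n : ℕ} {V : Type} (ρ : Fin n → Equiv.Perm V) (i : Fin n)
    (hinv : ρ i * ρ i = 1) (hfix : ∀ v, ρ i v ≠ v) (v : V) :
    {w | (Relation.EqvGen.setoid fun a b : V => ∃ j ∈ ({i} : Finset (Fin n)), ρ j a = b).r v w}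
      = {v, ρ i v} := by
  have hρρ : ∀ w, ρ i (ρ i w) = w := fun w => by
    have := congrArg (fun σ : Equiv.Perm V => σ w) hinv
    simpa using this
  ext w
  simp only [Set.mem_setOf_eq, Set.mem_insert_iff, Set.mem_singleton_iff]
  constructor
  · intro h
    have key : ∀ a b, Relation.EqvGen (fun a b : V => ∃ j ∈ ({i} : Finset (Fin n)), ρ j a = b) a b →
        ((a = v ∨ a = ρ i v) ↔ (b = v ∨ b = ρ i v)) := by
      intro a b hab
      induction hab with
      | rel a b hr =>
        obtain ⟨j, hj, rfl⟩ := hr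
        simp only [Finset.mem_singleton] at hj
        subst hj
        constructor
        · rintro (rfl | rfl)
          · exact Or.inr rfl
          · exact Or.inl (hρρ v)
        · rintro (h | h)
          · right; rw [← h, hρρ]
          · left; exact (ρ _).injective h
      | refl a => exact Iff.rfl
      | symm a b _ ih => exact ih.symm
      | trans a b c _ _ ih1 ih2 => exact ih1.trans ih2
    exact (key v w h).mp (Or.inl rfl)
  · rintro (rfl | rfl)
    · exact Relation.EqvGen.refl w
    · exact Relation.EqvGen.rel _ _ ⟨i, Finset.mem_singleton_self i, rfl⟩

lemma face_count {V : Type} [Finite V] (ρ : Fin 3 → Equiv.Perm V) (i : Fin 3) (c : ℕ)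
    (h : ∀ v : V, Nat.card (faceOf ρ i v) = c) :
    Nat.card V = ncomp ρ {i, i + 1} * c := by
  exact card_eq_classes_mul
    (Relation.EqvGen.setoid fun a b : V => ∃ j ∈ ({i, i + 1} : Finset (Fin 3)), ρ j a = b) c h

lemma match_count {V : Type} [Finite V] (ρ : Fin 3 → Equiv.Perm V) (i : Fin 3)
    (hinv : ρ i * ρ i = 1) (hfix : ∀ v, ρ i v ≠ v) :
    Nat.card V = ncomp ρ {i} * 2 := by
  refine card_eq_classes_mul _ 2 ?_
  intro v
  rw [matching_class ρ i hinv hfix v]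
  rw [Nat.card_coe_set_eq, Set.ncard_pair (Ne.symm (hfix v))]

lemma part1 {V : Type} [Finite V] (ρ : Fin 3 → Equiv.Perm V)
      (hinv : ∀ i, ρ i * ρ i = 1) (hfix : ∀ i v, ρ i v ≠ v)
      (hface : ∀ v : V, Nat.card (faceOf ρ 0 v) = 4 ∧ Nat.card (faceOf ρ 1 v) = 6 ∧
        Nat.card (faceOf ρ 2 v) = 14)
      (heq : (Nat.card V : ℤ) - (∑ i : Fin 3, ncomp ρ {i})
          + (∑ i : Fin 3, ncomp ρ {i, i + 1}) = -2) :
      Nat.card V = 168 := by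
  have h0 : Nat.card V = ncomp ρ {0, 1} * 4 := face_count ρ 0 4 (fun v => (hface v).1)
  have h1 : Nat.card V = ncomp ρ {1, 2} * 6 := face_count ρ 1 6 (fun v => (hface v).2.1)
  have h2 : Nat.card V = ncomp ρ {2, 0} * 14 := face_count ρ 2 14 (fun v => (hface v).2.2)
  have m0 := match_count ρ 0 (hinv 0) (hfix 0)
  have m1 := match_count ρ 1 (hinv 1) (hfix 1)
  have m2 := match_count ρ 2 (hinv 2) (hfix 2)
  rw [Fin.sum_univ_three, Fin.sum_univ_three] at heq
  push_cast at heq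
  omega

-- basic rational helpers
lemma inv_le_inv_nat {a n : ℕ} (hn : 0 < n) (h : n ≤ a) : (1:ℚ)/a ≤ 1/n := by
  apply one_div_le_one_div_of_le
  · exact_mod_cast hn
  · exact_mod_cast h

lemma inv_pos_nat {a : ℕ} (ha : 0 < a) : (0:ℚ) < 1/a := by positivity

lemma div_le_div_nat {k q n : ℕ} (hn : 0 < n) (h : n ≤ q) : (k:ℚ)/q ≤ (k:ℚ)/n := by
  apply div_le_div_of_nonneg_left (by positivity)
  · exact_mod_cast hn
  · exact_mod_cast h

lemma even_step {c : ℕ} (t : ℕ) (h : Even c) (h2 : t < c) (ht : Even t) : t+2 ≤ c := by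
  obtain ⟨m, rfl⟩ := h; obtain ⟨u, rfl⟩ := ht; omega

-- from (1:ℚ)/c < 1/m (m>0, c>0) deduce m < c
lemma nat_lt_of_inv_lt {c m : ℕ} (hc : 0 < c) (h : (1:ℚ)/c < 1/m) : m < c := by
  have hcq : (0:ℚ) < c := by exact_mod_cast hc
  have := lt_of_one_div_lt_one_div hcq h
  exact_mod_cast this

/-- q even, 4 ≤ q, q ≠ 4 gives 6 ≤ q -/
lemma six_le {q : ℕ} (he : Even q) (h4 : 4 ≤ q) (hne : q ≠ 4) : 6 ≤ q := by
  obtain ⟨m, rfl⟩ := he; omega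

lemma two_case {a b : ℕ} (hea : Even a) (ha : 4 ≤ a) (heb : Even b) (hb : 4 ≤ b)
    (h : (1:ℚ)/a + 2/b < 1/2) : (1:ℚ)/a + 2/b ≤ 41/84 := by
  have ha0 : 0 < a := by omega
  have hb0 : 0 < b := by omega
  have hia : (1:ℚ)/a ≤ 1/4 := inv_le_inv_nat (by norm_num) ha
  have hpa : (0:ℚ) < 1/a := inv_pos_nat ha0
  have h2b : (2:ℚ)/b = 2 * (1/b) := by ring
  rcases eq_or_lt_of_le hb with hb4 | hb6
  · -- b = 4 : contradiction
    exfalso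
    rw [← hb4] at h
    norm_num at h
    linarith
  · have hb6 : 6 ≤ b := even_step 4 heb (by omega) (by decide)
    rcases eq_or_lt_of_le hb6 with hb6' | hb8
    · -- b = 6
      rw [← hb6'] at h ⊢
      push_cast at h ⊢
      -- 1/a < 1/6 hence a ≥ 8
      have : (1:ℚ)/a < 1/6 := by linarith
      have ha8 : 8 ≤ a := even_step 6 hea (nat_lt_of_inv_lt ha0 this) (by decide)
      have : (1:ℚ)/a ≤ 1/8 := inv_le_inv_nat (by norm_num) ha8
      linarith
    · have hb8 : 8 ≤ b := even_step 6 heb (by omega) (by decide)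
      have hib8 : (1:ℚ)/b ≤ 1/8 := inv_le_inv_nat (by norm_num) hb8
      rcases eq_or_lt_of_le ha with ha4 | ha6
      · -- a = 4 : then 2/b < 1/4, so b ≥ 10
        rw [← ha4] at h ⊢
        rw [h2b] at h ⊢
        push_cast at h ⊢
        have : (1:ℚ)/b < 1/8 := by linarith
        have hb10 : 10 ≤ b := even_step 8 heb (nat_lt_of_inv_lt hb0 this) (by decide)
        have : (1:ℚ)/b ≤ 1/10 := inv_le_inv_nat (by norm_num) hb10
        linarith
      · have ha6 : 6 ≤ a := even_step 4 hea (by omega) (by decide)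
        have : (1:ℚ)/a ≤ 1/6 := inv_le_inv_nat (by norm_num) ha6
        rw [h2b]
        linarith

lemma three_sorted {a b c : ℕ} (hea : Even a) (ha : 4 ≤ a) (heb : Even b) (heb4 : 4 ≤ b)
    (hec : Even c) (hc4 : 4 ≤ c) (hab : a ≤ b) (hbc : b ≤ c)
    (h : (1:ℚ)/a + 1/b + 1/c < 1/2) : (1:ℚ)/a + 1/b + 1/c ≤ 41/84 := by
  have ha0 : 0 < a := by omega
  have hb0 : 0 < b := by omega
  have hc0 : 0 < c := by omega
  have hpc : (0:ℚ) < 1/c := inv_pos_nat hc0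
  have hpb : (0:ℚ) < 1/b := inv_pos_nat hb0
  have hic4 : (1:ℚ)/c ≤ 1/4 := inv_le_inv_nat (by norm_num) hc4
  rcases eq_or_lt_of_le ha with ha4 | ha6
  · -- a = 4
    rw [← ha4] at h ⊢
    push_cast at h ⊢
    rcases eq_or_lt_of_le heb4 with hb4 | hb6
    · exfalso; rw [← hb4] at h; push_cast at h; linarith
    · have hb6 : 6 ≤ b := even_step 4 heb (by omega) (by decide)
      rcases eq_or_lt_of_le hb6 with hb6' | hb8
      · rw [← hb6'] at h ⊢
        push_cast at h ⊢
        have : (1:ℚ)/c < 1/12 := by linarith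
        have hc14 : 14 ≤ c := even_step 12 hec (nat_lt_of_inv_lt hc0 this) (by decide)
        have : (1:ℚ)/c ≤ 1/14 := inv_le_inv_nat (by norm_num) hc14
        linarith
      · have hb8 : 8 ≤ b := even_step 6 heb (by omega) (by decide)
        rcases eq_or_lt_of_le hb8 with hb8' | hb10
        · rw [← hb8'] at h ⊢
          push_cast at h ⊢
          have : (1:ℚ)/c < 1/8 := by linarith
          have hc10 : 10 ≤ c := even_step 8 hec (nat_lt_of_inv_lt hc0 this) (by decide)
          have : (1:ℚ)/c ≤ 1/10 := inv_le_inv_nat (by norm_num) hc10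
          linarith
        · have hb10 : 10 ≤ b := even_step 8 heb (by omega) (by decide)
          have h1 : (1:ℚ)/b ≤ 1/10 := inv_le_inv_nat (by norm_num) hb10
          have h2 : (1:ℚ)/c ≤ 1/10 := inv_le_inv_nat (by norm_num) (le_trans hb10 hbc)
          linarith
  · have ha6 : 6 ≤ a := even_step 4 hea (by omega) (by decide)
    have hia : (1:ℚ)/a ≤ 1/6 := inv_le_inv_nat (by norm_num) ha6
    have hb6 : 6 ≤ b := le_trans ha6 hab
    rcases eq_or_lt_of_le hb6 with hb6' | hb8
    · rw [← hb6'] at h ⊢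
      push_cast at h ⊢
      have : (1:ℚ)/c < 1/2 - 1/6 - 1/a := by linarith
      have ha6' : a = 6 := by omega
      rw [ha6'] at h this ⊢
      push_cast at this h ⊢
      have : (1:ℚ)/c < 1/6 := by linarith
      have hc8 : 8 ≤ c := even_step 6 hec (nat_lt_of_inv_lt hc0 this) (by decide)
      have : (1:ℚ)/c ≤ 1/8 := inv_le_inv_nat (by norm_num) hc8
      linarith
    · have hb8 : 8 ≤ b := even_step 6 heb (by omega) (by decide)
      have h1 : (1:ℚ)/b ≤ 1/8 := inv_le_inv_nat (by norm_num) hb8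
      have h2 : (1:ℚ)/c ≤ 1/8 := inv_le_inv_nat (by norm_num) (le_trans hb8 hbc)
      linarith

lemma three_case {a b c : ℕ} (hea : Even a) (ha : 4 ≤ a) (heb : Even b) (hb : 4 ≤ b)
    (hec : Even c) (hc : 4 ≤ c)
    (h : (1:ℚ)/a + 1/b + 1/c < 1/2) : (1:ℚ)/a + 1/b + 1/c ≤ 41/84 := by
  rcases le_total a b with h1 | h1 <;> rcases le_total b c with h2 | h2 <;>
    rcases le_total a c with h3 | h3
  · linarith [three_sorted hea ha heb hb hec hc h1 h2 (by linarith)]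
  · linarith [three_sorted hea ha heb hb hec hc h1 h2 (by linarith)]
  · linarith [three_sorted hea ha hec hc heb hb h3 h2 (by linarith)]
  · linarith [three_sorted hec hc hea ha heb hb h3 h1 (by linarith)]
  · linarith [three_sorted heb hb hea ha hec hc h1 h3 (by linarith)]
  · linarith [three_sorted heb hb hec hc hea ha h2 h3 (by linarith)]
  · linarith [three_sorted hec hc heb hb hea ha h2 h1 (by linarith)]
  · linarith [three_sorted hec hc heb hb hea ha h2 h1 (by linarith)]

lemma one_case {a : ℕ} (hea : Even a) (ha : 4 ≤ a) (h : (3:ℚ)/a < 1/2) :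
    (3:ℚ)/a ≤ 41/84 := by
  have ha0 : (0:ℚ) < a := by exact_mod_cast (by omega : 0 < a)
  have h6 : (6:ℚ) < a := by rw [div_lt_iff₀ ha0] at h; linarith
  have h6' : 6 < a := by exact_mod_cast h6
  have ha8 : 8 ≤ a := even_step 6 hea h6' (by decide)
  have := div_le_div_nat (k := 3) (by norm_num : 0 < 8) ha8
  push_cast at this
  linarith

lemma sum_le_quarter {l : ℕ} (q k : Fin (l + 1) → ℕ) (hq : ∀ i, 4 ≤ q i) :
    ∑ i, (k i : ℚ) / (q i : ℚ) ≤ (∑ i, (k i : ℚ)) / 4 := by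
  rw [Finset.sum_div]
  exact Finset.sum_le_sum fun i _ => div_le_div_nat (by norm_num) (hq i)

lemma part2 (d p l : ℕ) (q k : Fin (l + 1) → ℕ) (hd : 2 ≤ d) (hp : 0 < p)
    (hq : ∀ i, Even (q i) ∧ 4 ≤ q i) (hk : ∀ i, 0 < k i) (hsum : ∑ i, k i = d + 1)
    (heq : (p : ℚ) * (1 - ((d : ℚ) + 1) / 2 + ∑ i, (k i : ℚ) / (q i : ℚ)) = -2) :
    p ≤ 168 := by
  have hpq : (0:ℚ) < p := by exact_mod_cast hp
  set S : ℚ := ∑ i, (k i : ℚ) / (q i : ℚ) with hSdef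
  have h2 : (1 - ((d : ℚ) + 1) / 2 + S) = -2 / p := by
    rw [eq_div_iff (ne_of_gt hpq)]
    linarith [heq, mul_comm (p:ℚ) (1 - ((d : ℚ) + 1) / 2 + S)]
  have hE : S = ((d:ℚ) - 1)/2 - 2/p := by
    have hneg : (-2:ℚ)/p = -(2/p) := by ring
    linarith
  have hpos : (0:ℚ) < 2/p := by positivity
  have hSlt : S < ((d:ℚ) - 1)/2 := by linarith
  have hks : (∑ i, (k i : ℚ)) = (d:ℚ) + 1 := by
    rw [← Nat.cast_sum, hsum]; push_cast; ring
  suffices hS : S ≤ ((d:ℚ) - 1)/2 - 1/84 by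
    have h84 : (1:ℚ)/84 ≤ 2/p := by linarith
    rw [div_le_div_iff₀ (by norm_num) hpq] at h84
    exact_mod_cast (by linarith : (p:ℚ) ≤ 168)
  rcases lt_or_ge d 4 with hd4 | hd4
  · -- d = 2 or d = 3
    interval_cases d
    · -- d = 2
      push_cast at hSlt ⊢
      norm_num at hSlt ⊢
      have hl : l + 1 ≤ 3 := by
        have := Finset.card_nsmul_le_sum Finset.univ k 1 (fun i _ => hk i)
        simpa [hsum] using this
      rcases (by omega : l = 0 ∨ l = 1 ∨ l = 2) with rfl | rfl | rfl
      · -- one part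
        have hk0 : k 0 = 3 := by simpa [Fin.sum_univ_one] using hsum
        rw [hSdef, Fin.sum_univ_one, hk0] at hSlt ⊢
        push_cast at hSlt ⊢
        have := one_case (hq 0).1 (hq 0).2 (by linarith)
        linarith
      · -- two parts
        rw [hSdef, Fin.sum_univ_two] at hSlt ⊢
        have hsum2 : k 0 + k 1 = 3 := by simpa [Fin.sum_univ_two] using hsum
        have hk0' := hk 0
        have hk1' := hk 1
        rcases (by omega : k 0 = 1 ∧ k 1 = 2 ∨ k 0 = 2 ∧ k 1 = 1) with ⟨e0, e1⟩ | ⟨e0, e1⟩ <;>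
          rw [e0, e1] at hSlt ⊢ <;> push_cast at hSlt ⊢
        · have := two_case (hq 0).1 (hq 0).2 (hq 1).1 (hq 1).2 (by linarith)
          linarith
        · have := two_case (hq 1).1 (hq 1).2 (hq 0).1 (hq 0).2 (by linarith)
          linarith
      · -- three parts
        rw [hSdef, Fin.sum_univ_three] at hSlt ⊢
        have hsum3 : k 0 + k 1 + k 2 = 3 := by simpa [Fin.sum_univ_three] using hsum
        have e0 : k 0 = 1 := by have := hk 0; have := hk 1; have := hk 2; omega
        have e1 : k 1 = 1 := by have := hk 0; have := hk 1; have := hk 2; omega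
        have e2 : k 2 = 1 := by have := hk 0; have := hk 1; have := hk 2; omega
        rw [e0, e1, e2] at hSlt ⊢
        push_cast at hSlt ⊢
        have := three_case (hq 0).1 (hq 0).2 (hq 1).1 (hq 1).2 (hq 2).1 (hq 2).2 (by linarith)
        linarith
    · -- d = 3
      push_cast at hSlt ⊢
      norm_num at hSlt ⊢
      by_cases hall : ∀ i, q i = 4
      · exfalso
        have : S = (∑ i, (k i : ℚ))/4 := by
          rw [hSdef, Finset.sum_div]
          exact Finset.sum_congr rfl fun i _ => by rw [hall i]; norm_num
        rw [hks] at this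
        push_cast at this
        rw [this] at hSlt
        norm_num at hSlt
      · push_neg at hall
        obtain ⟨j, hj⟩ := hall
        have hj6 : 6 ≤ q j := six_le (hq j).1 (hq j).2 hj
        set f : Fin (l+1) → ℚ := fun i => (k i : ℚ) / (q i : ℚ) with hf
        set g : Fin (l+1) → ℚ := fun i => (k i : ℚ) / 4 with hg
        have e1 : S = f j + ∑ i ∈ Finset.univ.erase j, f i :=
          (Finset.add_sum_erase _ f (Finset.mem_univ j)).symm
        have e2 : (∑ i, g i) = g j + ∑ i ∈ Finset.univ.erase j, g i :=
          (Finset.add_sum_erase _ g (Finset.mem_univ j)).symm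
        have hb1 : f j ≤ (k j : ℚ)/6 := div_le_div_nat (by norm_num) hj6
        have hb2 : ∑ i ∈ Finset.univ.erase j, f i ≤ ∑ i ∈ Finset.univ.erase j, g i :=
          Finset.sum_le_sum fun i _ => div_le_div_nat (by norm_num) (hq i).2
        have hgs : (∑ i, g i) = 1 := by
          rw [hg, ← Finset.sum_div, hks]; push_cast; norm_num
        have hkj : (1:ℚ) ≤ k j := by exact_mod_cast hk j
        have hgj : g j = (k j : ℚ)/4 := rfl
        have : S ≤ 1 - (k j : ℚ)/12 := by
          rw [e1]; rw [e2] at hgs; linarith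
        linarith
  · -- d ≥ 4
    have h1 : S ≤ ((d:ℚ) + 1)/4 := by
      rw [hSdef, ← hks]
      exact sum_le_quarter q k fun i => (hq i).2
    have hd4' : (4:ℚ) ≤ d := by exact_mod_cast hd4
    linarith

end SEHelpers

/-- A semi-equivelar 3-colored graph of type `(4,6,14)` regularly embedded on
a surface of Euler characteristic `-2` has exactly `168` vertices; moreover
`168` is the maximal vertex count among all semi-equivelar types on such a
surface: every solution of `p(1 - (d+1)/2 + Σ k_i/q_i) = -2` with even
`q_i ≥ 4` has `p ≤ 168`. -/
theorem type_4_6_14_count_and_maximality :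
    (∀ {V : Type} [Finite V] (ρ : Fin 3 → Equiv.Perm V),
      (∀ i, ρ i * ρ i = 1) → (∀ i v, ρ i v ≠ v) →
      (∀ v : V, Nat.card (faceOf ρ 0 v) = 4 ∧ Nat.card (faceOf ρ 1 v) = 6 ∧
        Nat.card (faceOf ρ 2 v) = 14) →
      ((Nat.card V : ℤ) - (∑ i : Fin 3, ncomp ρ {i})
          + (∑ i : Fin 3, ncomp ρ {i, i + 1}) = -2) →
      Nat.card V = 168)
    ∧ (∀ (d p l : ℕ) (q k : Fin (l + 1) → ℕ), 2 ≤ d → 0 < p →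
      (∀ i, Even (q i) ∧ 4 ≤ q i) → (∀ i, 0 < k i) → (∑ i, k i = d + 1) →
      (p : ℚ) * (1 - ((d : ℚ) + 1) / 2 + ∑ i, (k i : ℚ) / (q i : ℚ)) = -2 →
      p ≤ 168) := by
  constructor
  · intro V _ ρ hinv hfix hface heq
    exact part1 ρ hinv hfix hface heq
  · intro d p l q k hd hp hq hk hsum heq
    exact part2 d p l q k hd hp hq hk hsum heq
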